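/- Let f : ℝ² → ℝ be twice continuously differentiable, let ε ∈ (0,1] and R > 0, set Q = {j ∈ ℤ² : |j|_∞ > ε^{−1}R + 1}, and for each j = (j₁,j₂) ∈ Q let x^{(j)} be a point of the unit cell [j₁, j₁+1] × [j₂, j₂+1]. Then Σ_{j ∈ Q} f(ε x^{(j)})² ≤ 4 ε^{−2} ‖f‖²_{H²({X ∈ ℝ² : |X| > R})}, where ‖f‖²_{H²(A)} = ∫_A f² + Σ_{1 ≤ |α| ≤ 2} (∂^α f)² dX. -/

import Mathlib

open MeasureTheory

noncomputable section

/-- Euclidean norm on `ℝ²` (represented as `ℝ × ℝ`). -/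
def eN (X : ℝ × ℝ) : ℝ := Real.sqrt (X.1 ^ 2 + X.2 ^ 2)

/-- Partial derivative in the first coordinate. -/
def pd1 (f : ℝ × ℝ → ℝ) (X : ℝ × ℝ) : ℝ := deriv (fun a => f (a, X.2)) X.1

/-- Partial derivative in the second coordinate. -/
def pd2 (f : ℝ × ℝ → ℝ) (X : ℝ × ℝ) : ℝ := deriv (fun b => f (X.1, b)) X.2

/-- The closed unit cell `[j₁, j₁+1] × [j₂, j₂+1]`. -/
def cell (j : ℤ × ℤ) : Set (ℝ × ℝ) :=
  Set.Icc ((j.1 : ℝ), (j.2 : ℝ)) ((j.1 : ℝ) + 1, (j.2 : ℝ) + 1)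

/-- The (squared) `H²` integrand: `f² + Σ_{1 ≤ |α| ≤ 2} (∂^α f)²`. -/
def H2integrand (f : ℝ × ℝ → ℝ) (X : ℝ × ℝ) : ℝ :=
  (f X) ^ 2 + (pd1 f X) ^ 2 + (pd2 f X) ^ 2 +
    (pd1 (pd1 f) X) ^ 2 + (pd1 (pd2 f) X) ^ 2 + (pd2 (pd2 f) X) ^ 2

open scoped ENNReal Pointwise
open intervalIntegral

section Aux

lemma pd1_hasFDeriv' {g : ℝ × ℝ → ℝ} {y : ℝ × ℝ} {D : ℝ × ℝ →L[ℝ] ℝ}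
    (h : HasFDerivAt g D y) : pd1 g y = D (1, 0) := by
  have h1 : HasDerivAt (fun a : ℝ => (a, y.2)) ((1 : ℝ), (0 : ℝ)) y.1 :=
    (hasDerivAt_id y.1).prodMk (hasDerivAt_const y.1 y.2)
  exact (h.comp_hasDerivAt y.1 (by simpa using h1)).deriv

lemma pd2_hasFDeriv' {g : ℝ × ℝ → ℝ} {y : ℝ × ℝ} {D : ℝ × ℝ →L[ℝ] ℝ}
    (h : HasFDerivAt g D y) : pd2 g y = D (0, 1) := by
  have h1 : HasDerivAt (fun b : ℝ => (y.1, b)) ((0 : ℝ), (1 : ℝ)) y.2 :=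
    (hasDerivAt_const y.2 y.1).prodMk (hasDerivAt_id y.2)
  exact (h.comp_hasDerivAt y.2 (by simpa using h1)).deriv

lemma pd1_eq' (f : ℝ × ℝ → ℝ) (hf : Differentiable ℝ f) (X : ℝ × ℝ) :
    pd1 f X = fderiv ℝ f X (1, 0) := pd1_hasFDeriv' (hf X).hasFDerivAt

lemma pd2_eq' (f : ℝ × ℝ → ℝ) (hf : Differentiable ℝ f) (X : ℝ × ℝ) :
    pd2 f X = fderiv ℝ f X (0, 1) := pd2_hasFDeriv' (hf X).hasFDerivAt

lemma contDiff_pd1' {n : ℕ} (f : ℝ × ℝ → ℝ) (hf : ContDiff ℝ (n + 1) f) :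
    ContDiff ℝ n (pd1 f) := by
  have : pd1 f = fun X => fderiv ℝ f X (1, 0) :=
    funext fun X => pd1_eq' f (hf.differentiable (by simp)) X
  rw [this]
  exact (hf.fderiv_right (by norm_cast)).clm_apply contDiff_const

lemma contDiff_pd2' {n : ℕ} (f : ℝ × ℝ → ℝ) (hf : ContDiff ℝ (n + 1) f) :
    ContDiff ℝ n (pd2 f) := by
  have : pd2 f = fun X => fderiv ℝ f X (0, 1) :=
    funext fun X => pd2_eq' f (hf.differentiable (by simp)) X
  rw [this]
  exact (hf.fderiv_right (by norm_cast)).clm_apply contDiff_const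

lemma oneD (h : ℝ → ℝ) (hh : ContDiff ℝ 1 h) (a t : ℝ) (ht : t ∈ Set.Icc a (a + 1)) :
    h t ^ 2 ≤ 2 * ∫ s in a..(a + 1), (h s ^ 2 + deriv h s ^ 2) := by
  have hd : Differentiable ℝ h := hh.differentiable one_ne_zero
  have hc : Continuous h := hd.continuous
  have hc' : Continuous (deriv h) := hh.continuous_deriv le_rfl
  have hcont : Continuous fun s => h s ^ 2 + deriv h s ^ 2 := by continuity
  have hcontg : Continuous fun s => 2 * h s * deriv h s := by continuity
  set B := ∫ s in a..(a + 1), (h s ^ 2 + deriv h s ^ 2) with hB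
  have hptle : ∀ u : ℝ, 2 * h u * deriv h u ≤ h u ^ 2 + deriv h u ^ 2 := fun u => by
    nlinarith [sq_nonneg (h u - deriv h u)]
  have hptge : ∀ u : ℝ, -(2 * h u * deriv h u) ≤ h u ^ 2 + deriv h u ^ 2 := fun u => by
    nlinarith [sq_nonneg (h u + deriv h u)]
  have hnn : ∀ u : ℝ, 0 ≤ h u ^ 2 + deriv h u ^ 2 := fun u => by positivity
  have hnnae : 0 ≤ᵐ[volume.restrict (Set.Ioc a (a + 1))]
      fun s => h s ^ 2 + deriv h s ^ 2 := Filter.Eventually.of_forall hnn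
  have key : ∀ s ∈ Set.Icc a (a + 1), h t ^ 2 ≤ h s ^ 2 + B := by
    intro s hs
    have FTC : ∫ u in s..t, 2 * h u * deriv h u = h t ^ 2 - h s ^ 2 := by
      apply integral_eq_sub_of_hasDerivAt (fun u _ => ?_) (hcontg.intervalIntegrable s t)
      refine ((hd u).hasDerivAt.pow 2).congr_deriv ?_
      norm_num
    have bnd : ∫ u in s..t, 2 * h u * deriv h u ≤ B := by
      rcases le_total s t with hst | hst
      · calc ∫ u in s..t, 2 * h u * deriv h u
            ≤ ∫ u in s..t, (h u ^ 2 + deriv h u ^ 2) := by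
              apply integral_mono_on hst (hcontg.intervalIntegrable s t)
                (hcont.intervalIntegrable s t) (fun u _ => hptle u)
          _ ≤ B := integral_mono_interval hs.1 hst ht.2 hnnae
              (hcont.intervalIntegrable a (a + 1))
      · have heq : ∫ u in s..t, 2 * h u * deriv h u = ∫ u in t..s, -(2 * h u * deriv h u) := by
          rw [intervalIntegral.integral_neg, intervalIntegral.integral_symm]
        rw [heq]
        calc ∫ u in t..s, -(2 * h u * deriv h u)
            ≤ ∫ u in t..s, (h u ^ 2 + deriv h u ^ 2) := by
              apply integral_mono_on hst (hcontg.neg.intervalIntegrable t s)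
                (hcont.intervalIntegrable t s) (fun u _ => hptge u)
          _ ≤ B := integral_mono_interval ht.1 hst hs.2 hnnae
              (hcont.intervalIntegrable a (a + 1))
    linarith [FTC ▸ bnd]
  have step : h t ^ 2 ≤ ∫ s in a..(a + 1), (h s ^ 2 + B) := by
    have := integral_mono_on (by linarith : a ≤ a + 1)
      (_root_.intervalIntegrable_const (c := h t ^ 2) (μ := volume))
      ((Continuous.intervalIntegrable (by continuity) a (a + 1)))
      (fun s hs => key s hs)
    simpa using this
  have split : ∫ s in a..(a + 1), (h s ^ 2 + B) = (∫ s in a..(a + 1), h s ^ 2) + B := by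
    rw [integral_add (Continuous.intervalIntegrable (by continuity) a (a + 1))
      (_root_.intervalIntegrable_const (μ := volume))]
    simp
  have mono2 : ∫ s in a..(a + 1), h s ^ 2 ≤ B := by
    apply integral_mono_on (by linarith) (Continuous.intervalIntegrable (by continuity) a (a + 1))
      (hcont.intervalIntegrable a (a + 1))
    intro s _; nlinarith [sq_nonneg (deriv h s)]
  linarith [split ▸ step]

lemma oneD' (h : ℝ → ℝ) (hh : ContDiff ℝ 1 h) (a t : ℝ) (ht : t ∈ Set.Icc a (a + 1)) :
    ENNReal.ofReal (h t ^ 2) ≤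
      2 * ∫⁻ s in Set.Icc a (a + 1), ENNReal.ofReal (h s ^ 2 + deriv h s ^ 2) := by
  have hc : Continuous fun s => h s ^ 2 + deriv h s ^ 2 := by
    have := (hh.differentiable one_ne_zero).continuous
    have := hh.continuous_deriv le_rfl
    continuity
  have h1 : ENNReal.ofReal (h t ^ 2) ≤
      ENNReal.ofReal (2 * ∫ s in a..(a + 1), (h s ^ 2 + deriv h s ^ 2)) :=
    ENNReal.ofReal_le_ofReal (oneD h hh a t ht)
  have h2 : ENNReal.ofReal (∫ s in a..(a + 1), (h s ^ 2 + deriv h s ^ 2)) =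
      ∫⁻ s in Set.Ioc a (a + 1), ENNReal.ofReal (h s ^ 2 + deriv h s ^ 2) := by
    rw [intervalIntegral.integral_of_le (by linarith)]
    exact ofReal_integral_eq_lintegral_ofReal
      (hc.integrableOn_Ioc)
      (Filter.Eventually.of_forall fun s => by positivity)
  calc ENNReal.ofReal (h t ^ 2)
      ≤ ENNReal.ofReal (2 * ∫ s in a..(a + 1), (h s ^ 2 + deriv h s ^ 2)) := h1
    _ = 2 * ENNReal.ofReal (∫ s in a..(a + 1), (h s ^ 2 + deriv h s ^ 2)) := by
        rw [ENNReal.ofReal_mul (by norm_num)]; norm_num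
    _ = 2 * ∫⁻ s in Set.Ioc a (a + 1), ENNReal.ofReal (h s ^ 2 + deriv h s ^ 2) := by rw [h2]
    _ ≤ 2 * ∫⁻ s in Set.Icc a (a + 1), ENNReal.ofReal (h s ^ 2 + deriv h s ^ 2) := by
        gcongr
        exact Set.Ioc_subset_Icc_self

lemma twoD (f : ℝ × ℝ → ℝ) (hf : ContDiff ℝ 2 f) (j : ℤ × ℤ) (x0 : ℝ × ℝ)
    (hx0 : x0 ∈ cell j) :
    ENNReal.ofReal (f x0 ^ 2) ≤ 4 * ∫⁻ X in cell j, ENNReal.ofReal (H2integrand f X) := by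
  set p : ℝ := (j.1 : ℝ)
  set q : ℝ := (j.2 : ℝ)
  have hf2 : ContDiff ℝ ((1 : ℕ) + 1) f := by exact_mod_cast hf
  have hf1 : ContDiff ℝ 1 f := hf.of_le one_le_two
  have hpd2 : ContDiff ℝ 1 (pd2 f) := by exact_mod_cast contDiff_pd2' (n := 1) f hf2
  have hpd1 : ContDiff ℝ 1 (pd1 f) := by exact_mod_cast contDiff_pd1' (n := 1) f hf2
  have hc0 : Continuous f := hf.continuous
  have hc1 : Continuous (pd1 f) := hpd1.continuous
  have hc2 : Continuous (pd2 f) := hpd2.continuous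
  have hc12 : Continuous (pd1 (pd2 f)) := by
    have := contDiff_pd1' (n := 0) (pd2 f) (by exact_mod_cast hpd2)
    exact this.continuous
  set S : ℝ × ℝ → ℝ := fun X =>
    f X ^ 2 + pd1 f X ^ 2 + pd2 f X ^ 2 + pd1 (pd2 f) X ^ 2 with hS
  have hScont : Continuous S := by fun_prop
  have hx1 : x0.1 ∈ Set.Icc p (p + 1) := ⟨hx0.1.1, hx0.2.1⟩
  have hx2 : x0.2 ∈ Set.Icc q (q + 1) := ⟨hx0.1.2, hx0.2.2⟩
  have hA : ENNReal.ofReal (f x0 ^ 2) ≤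
      2 * ∫⁻ b in Set.Icc q (q + 1),
        ENNReal.ofReal (f (x0.1, b) ^ 2 + pd2 f (x0.1, b) ^ 2) := by
    have hh : ContDiff ℝ 1 fun b => f (x0.1, b) :=
      hf1.comp (contDiff_const.prodMk contDiff_id)
    have := oneD' (fun b => f (x0.1, b)) hh q x0.2 hx2
    simpa [pd2] using this
  have hB : ∀ b : ℝ, ENNReal.ofReal (f (x0.1, b) ^ 2 + pd2 f (x0.1, b) ^ 2) ≤
      2 * ∫⁻ a in Set.Icc p (p + 1), ENNReal.ofReal (S (a, b)) := by
    intro b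
    have hB1 : ENNReal.ofReal (f (x0.1, b) ^ 2) ≤
        2 * ∫⁻ a in Set.Icc p (p + 1),
          ENNReal.ofReal (f (a, b) ^ 2 + pd1 f (a, b) ^ 2) := by
      have hh : ContDiff ℝ 1 fun a => f (a, b) :=
        hf1.comp (contDiff_id.prodMk contDiff_const)
      have := oneD' (fun a => f (a, b)) hh p x0.1 hx1
      simpa [pd1] using this
    have hB2 : ENNReal.ofReal (pd2 f (x0.1, b) ^ 2) ≤
        2 * ∫⁻ a in Set.Icc p (p + 1),
          ENNReal.ofReal (pd2 f (a, b) ^ 2 + pd1 (pd2 f) (a, b) ^ 2) := by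
      have hh : ContDiff ℝ 1 fun a => pd2 f (a, b) :=
        hpd2.comp (contDiff_id.prodMk contDiff_const)
      have := oneD' (fun a => pd2 f (a, b)) hh p x0.1 hx1
      simpa [pd1] using this
    have hsum : (∫⁻ a in Set.Icc p (p + 1),
          ENNReal.ofReal (f (a, b) ^ 2 + pd1 f (a, b) ^ 2)) +
        (∫⁻ a in Set.Icc p (p + 1),
          ENNReal.ofReal (pd2 f (a, b) ^ 2 + pd1 (pd2 f) (a, b) ^ 2)) =
        ∫⁻ a in Set.Icc p (p + 1), ENNReal.ofReal (S (a, b)) := by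
      rw [← lintegral_add_left]
      · apply lintegral_congr; intro a
        rw [← ENNReal.ofReal_add (by positivity) (by positivity)]
        congr 1; simp only [hS]; ring
      · exact ((hc0.comp (continuous_id.prodMk continuous_const)).pow 2 |>.add
          ((hc1.comp (continuous_id.prodMk continuous_const)).pow 2)).measurable.ennreal_ofReal
    calc ENNReal.ofReal (f (x0.1, b) ^ 2 + pd2 f (x0.1, b) ^ 2)
        = ENNReal.ofReal (f (x0.1, b) ^ 2) + ENNReal.ofReal (pd2 f (x0.1, b) ^ 2) :=
          ENNReal.ofReal_add (by positivity) (by positivity)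
      _ ≤ 2 * (∫⁻ a in Set.Icc p (p + 1),
            ENNReal.ofReal (f (a, b) ^ 2 + pd1 f (a, b) ^ 2)) +
          2 * (∫⁻ a in Set.Icc p (p + 1),
            ENNReal.ofReal (pd2 f (a, b) ^ 2 + pd1 (pd2 f) (a, b) ^ 2)) := add_le_add hB1 hB2
      _ = 2 * ∫⁻ a in Set.Icc p (p + 1), ENNReal.ofReal (S (a, b)) := by
          rw [← mul_add, hsum]
  have hAB : ENNReal.ofReal (f x0 ^ 2) ≤
      4 * ∫⁻ b in Set.Icc q (q + 1), ∫⁻ a in Set.Icc p (p + 1), ENNReal.ofReal (S (a, b)) := by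
    calc ENNReal.ofReal (f x0 ^ 2)
        ≤ 2 * ∫⁻ b in Set.Icc q (q + 1),
            ENNReal.ofReal (f (x0.1, b) ^ 2 + pd2 f (x0.1, b) ^ 2) := hA
      _ ≤ 2 * ∫⁻ b in Set.Icc q (q + 1),
            (2 * ∫⁻ a in Set.Icc p (p + 1), ENNReal.ofReal (S (a, b))) := by
          gcongr with b; exact hB b
      _ = 4 * ∫⁻ b in Set.Icc q (q + 1),
            ∫⁻ a in Set.Icc p (p + 1), ENNReal.ofReal (S (a, b)) := by
          rw [lintegral_const_mul' 2 _ (by norm_num), ← mul_assoc]; norm_num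
  have hcell : cell j = Set.Icc p (p + 1) ×ˢ Set.Icc q (q + 1) := by
    rw [cell, Set.Icc_prod_eq]
  have hT : (∫⁻ X in cell j, ENNReal.ofReal (S X)) =
      ∫⁻ b in Set.Icc q (q + 1), ∫⁻ a in Set.Icc p (p + 1), ENNReal.ofReal (S (a, b)) := by
    rw [hcell, Measure.volume_eq_prod, ← Measure.prod_restrict]
    exact lintegral_prod_symm _ (hScont.measurable.ennreal_ofReal).aemeasurable
  have hfin : ENNReal.ofReal (f x0 ^ 2) ≤ 4 * ∫⁻ X in cell j, ENNReal.ofReal (S X) := by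
    rw [hT]; exact hAB
  refine hfin.trans ?_
  gcongr with X
  simp only [hS, H2integrand]
  nlinarith [sq_nonneg (pd1 (pd1 f) X), sq_nonneg (pd2 (pd2 f) X)]

lemma smul_hasFDeriv (ε : ℝ) (y : ℝ × ℝ) :
    HasFDerivAt (fun z : ℝ × ℝ => ε • z)
      (ε • ContinuousLinearMap.id ℝ (ℝ × ℝ)) y := by
  exact (ε • ContinuousLinearMap.id ℝ (ℝ × ℝ)).hasFDerivAt (x := y)

lemma pd1_scale (u : ℝ × ℝ → ℝ) (hu : Differentiable ℝ u) (ε : ℝ) (y : ℝ × ℝ) :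
    pd1 (fun z => u (ε • z)) y = ε * pd1 u (ε • y) := by
  have hcomp : HasFDerivAt (fun z => u (ε • z))
      ((fderiv ℝ u (ε • y)).comp (ε • ContinuousLinearMap.id ℝ (ℝ × ℝ))) y :=
    (hu (ε • y)).hasFDerivAt.comp y (smul_hasFDeriv ε y)
  rw [pd1_hasFDeriv' hcomp, pd1_hasFDeriv' (hu (ε • y)).hasFDerivAt]
  simp [smul_smul]

lemma pd2_scale (u : ℝ × ℝ → ℝ) (hu : Differentiable ℝ u) (ε : ℝ) (y : ℝ × ℝ) :
    pd2 (fun z => u (ε • z)) y = ε * pd2 u (ε • y) := by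
  have hcomp : HasFDerivAt (fun z => u (ε • z))
      ((fderiv ℝ u (ε • y)).comp (ε • ContinuousLinearMap.id ℝ (ℝ × ℝ))) y :=
    (hu (ε • y)).hasFDerivAt.comp y (smul_hasFDeriv ε y)
  rw [pd2_hasFDeriv' hcomp, pd2_hasFDeriv' (hu (ε • y)).hasFDerivAt]
  simp [smul_smul]

lemma pd1_const_mul (u : ℝ × ℝ → ℝ) (c : ℝ) (y : ℝ × ℝ) :
    pd1 (fun z => c * u z) y = c * pd1 u y := by
  simp [pd1, deriv_const_mul_field]

lemma pd2_const_mul (u : ℝ × ℝ → ℝ) (c : ℝ) (y : ℝ × ℝ) :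
    pd2 (fun z => c * u z) y = c * pd2 u y := by
  simp [pd2, deriv_const_mul_field]

lemma H2_scale (f : ℝ × ℝ → ℝ) (hf : ContDiff ℝ 2 f) {ε : ℝ} (hε : 0 < ε) (hε1 : ε ≤ 1)
    (y : ℝ × ℝ) :
    H2integrand (fun z => f (ε • z)) y ≤ H2integrand f (ε • y) := by
  have hd : Differentiable ℝ f := hf.differentiable two_ne_zero
  have hf2 : ContDiff ℝ ((1 : ℕ) + 1) f := by exact_mod_cast hf
  have hd1 : Differentiable ℝ (pd1 f) :=
    (by exact_mod_cast contDiff_pd1' (n := 1) f hf2 : ContDiff ℝ 1 (pd1 f)).differentiable one_ne_zero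
  have hd2 : Differentiable ℝ (pd2 f) :=
    (by exact_mod_cast contDiff_pd2' (n := 1) f hf2 : ContDiff ℝ 1 (pd2 f)).differentiable one_ne_zero
  have g1 : pd1 (fun z => f (ε • z)) = fun z => ε * pd1 f (ε • z) :=
    funext (pd1_scale f hd ε)
  have g2 : pd2 (fun z => f (ε • z)) = fun z => ε * pd2 f (ε • z) :=
    funext (pd2_scale f hd ε)
  have e1 : pd1 (fun z => f (ε • z)) y = ε * pd1 f (ε • y) := pd1_scale f hd ε y
  have e2 : pd2 (fun z => f (ε • z)) y = ε * pd2 f (ε • y) := pd2_scale f hd ε y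
  have e11 : pd1 (pd1 fun z => f (ε • z)) y = ε * (ε * pd1 (pd1 f) (ε • y)) := by
    rw [g1, pd1_const_mul (fun z => pd1 f (ε • z)) ε y, pd1_scale (pd1 f) hd1 ε y]
  have e12 : pd1 (pd2 fun z => f (ε • z)) y = ε * (ε * pd1 (pd2 f) (ε • y)) := by
    rw [g2, pd1_const_mul (fun z => pd2 f (ε • z)) ε y, pd1_scale (pd2 f) hd2 ε y]
  have e22 : pd2 (pd2 fun z => f (ε • z)) y = ε * (ε * pd2 (pd2 f) (ε • y)) := by
    rw [g2, pd2_const_mul (fun z => pd2 f (ε • z)) ε y, pd2_scale (pd2 f) hd2 ε y]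
  have he2 : ε ^ 2 ≤ 1 := by nlinarith
  have he4 : ε ^ 2 * ε ^ 2 ≤ 1 := by nlinarith
  simp only [H2integrand, e1, e2, e11, e12, e22]
  nlinarith [mul_nonneg (sub_nonneg.2 he2) (sq_nonneg (pd1 f (ε • y))),
    mul_nonneg (sub_nonneg.2 he2) (sq_nonneg (pd2 f (ε • y))),
    mul_nonneg (sub_nonneg.2 he4) (sq_nonneg (pd1 (pd1 f) (ε • y))),
    mul_nonneg (sub_nonneg.2 he4) (sq_nonneg (pd1 (pd2 f) (ε • y))),
    mul_nonneg (sub_nonneg.2 he4) (sq_nonneg (pd2 (pd2 f) (ε • y)))]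

lemma cov (h : ℝ × ℝ → ℝ≥0∞) {s : Set (ℝ × ℝ)} (hs : MeasurableSet s)
    {ε : ℝ} (hε : ε ≠ 0) :
    ∫⁻ y in s, h (ε • y) = ENNReal.ofReal (|(ε ^ 2)⁻¹|) * ∫⁻ X in ε • s, h X := by
  have hsm : MeasurableSet (ε • s) := hs.const_smul_of_ne_zero hε
  set G : ℝ × ℝ → ℝ≥0∞ := (ε • s).indicator h with hG
  have hpt : ∀ y, s.indicator (fun y => h (ε • y)) y = G (ε • y) := by
    intro y
    by_cases hy : y ∈ s
    · rw [Set.indicator_of_mem hy, hG,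
        Set.indicator_of_mem ((Set.smul_mem_smul_set_iff₀ hε s y).2 hy)]
    · rw [Set.indicator_of_notMem hy, hG,
        Set.indicator_of_notMem (fun hc => hy ((Set.smul_mem_smul_set_iff₀ hε s y).1 hc))]
  have hfr : Module.finrank ℝ (ℝ × ℝ) = 2 := by simp
  let e : (ℝ × ℝ) ≃ᵐ (ℝ × ℝ) :=
    (Homeomorph.smul (isUnit_iff_ne_zero.2 hε).unit).toMeasurableEquiv
  have he : ⇑e = fun y : ℝ × ℝ => ε • y := by
    ext y : 1
    simp [e, Homeomorph.smul, Units.smul_def]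
  calc ∫⁻ y in s, h (ε • y)
      = ∫⁻ y, s.indicator (fun y => h (ε • y)) y := by
        rw [lintegral_indicator hs]
    _ = ∫⁻ y, G (e y) := by simp_rw [hpt, he]
    _ = ∫⁻ z, G z ∂(Measure.map e volume) := (lintegral_map_equiv G e).symm
    _ = ∫⁻ z, G z ∂(Measure.map (fun y : ℝ × ℝ => ε • y) volume) := by rw [← he]
    _ = ENNReal.ofReal (|(ε ^ 2)⁻¹|) * ∫⁻ z, G z := by
        rw [Measure.map_addHaar_smul volume hε, hfr, lintegral_smul_measure, smul_eq_mul]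
    _ = ENNReal.ofReal (|(ε ^ 2)⁻¹|) * ∫⁻ X in ε • s, h X := by
        rw [hG, lintegral_indicator hsm]

lemma geom {ε R : ℝ} (hε : 0 < ε) {j : ℤ × ℤ}
    (hj : ε⁻¹ * R + 1 < ((max |j.1| |j.2| : ℤ) : ℝ)) {y : ℝ × ℝ} (hy : y ∈ cell j) :
    R < eN (ε • y) := by
  obtain ⟨⟨ha1, ha2⟩, ⟨hb1, hb2⟩⟩ := hy
  simp only at ha1 ha2 hb1 hb2
  have h1 : |(j.1 : ℝ)| - 1 ≤ |y.1| := by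
    rcases le_or_gt 0 ((j.1 : ℝ)) with hj1 | hj1
    · have := le_abs_self y.1; rw [abs_of_nonneg hj1]; linarith
    · have := neg_le_abs y.1; rw [abs_of_neg hj1]; linarith
  have h2 : |(j.2 : ℝ)| - 1 ≤ |y.2| := by
    rcases le_or_gt 0 ((j.2 : ℝ)) with hj2 | hj2
    · have := le_abs_self y.2; rw [abs_of_nonneg hj2]; linarith
    · have := neg_le_abs y.2; rw [abs_of_neg hj2]; linarith
  have hmax : ((max |j.1| |j.2| : ℤ) : ℝ) = max |(j.1 : ℝ)| |(j.2 : ℝ)| := by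
    push_cast; rfl
  have hmaxy : ε⁻¹ * R < max |y.1| |y.2| := by
    have hle : max |(j.1 : ℝ)| |(j.2 : ℝ)| - 1 ≤ max |y.1| |y.2| := by
      rcases max_cases |(j.1 : ℝ)| |(j.2 : ℝ)| with ⟨he, _⟩ | ⟨he, _⟩ <;> rw [he]
      · exact le_trans h1 (le_max_left _ _)
      · exact le_trans h2 (le_max_right _ _)
    rw [hmax] at hj; linarith
  have e1 : ε * |y.1| ≤ eN (ε • y) := by
    have heq : ε * |y.1| = Real.sqrt ((ε * y.1) ^ 2) := by
      rw [Real.sqrt_sq_eq_abs, abs_mul, abs_of_pos hε]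
    rw [heq, eN]
    apply Real.sqrt_le_sqrt
    simp only [Prod.smul_fst, Prod.smul_snd, smul_eq_mul]
    nlinarith [sq_nonneg (ε * y.2)]
  have e2 : ε * |y.2| ≤ eN (ε • y) := by
    have heq : ε * |y.2| = Real.sqrt ((ε * y.2) ^ 2) := by
      rw [Real.sqrt_sq_eq_abs, abs_mul, abs_of_pos hε]
    rw [heq, eN]
    apply Real.sqrt_le_sqrt
    simp only [Prod.smul_fst, Prod.smul_snd, smul_eq_mul]
    nlinarith [sq_nonneg (ε * y.1)]
  have hmaxe : ε * max |y.1| |y.2| ≤ eN (ε • y) := by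
    rcases max_cases |y.1| |y.2| with ⟨he, _⟩ | ⟨he, _⟩ <;> rw [he]
    exacts [e1, e2]
  have hR' : R = ε * (ε⁻¹ * R) := by field_simp
  calc R = ε * (ε⁻¹ * R) := hR'
    _ < ε * max |y.1| |y.2| := mul_lt_mul_of_pos_left hmaxy hε
    _ ≤ eN (ε • y) := hmaxe

lemma cell_inter_null {j k : ℤ × ℤ} (hjk : j ≠ k) : volume (cell j ∩ cell k) = 0 := by
  have hcell : ∀ m : ℤ × ℤ, cell m =
      Set.Icc (m.1 : ℝ) ((m.1 : ℝ) + 1) ×ˢ Set.Icc (m.2 : ℝ) ((m.2 : ℝ) + 1) := fun m => by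
    rw [cell, Set.Icc_prod_eq]
  have key : ∀ a b : ℤ, a ≠ b →
      volume (Set.Icc (a : ℝ) ((a : ℝ) + 1) ∩ Set.Icc (b : ℝ) ((b : ℝ) + 1)) = 0 := by
    intro a b hab
    rw [Set.Icc_inter_Icc, Real.volume_Icc]
    rcases lt_or_gt_of_ne hab with h | h
    · have : (a : ℝ) + 1 ≤ (b : ℝ) := by exact_mod_cast Int.add_one_le_iff.2 h
      rw [ENNReal.ofReal_eq_zero.2]
      have h1 : min ((a : ℝ) + 1) ((b : ℝ) + 1) ≤ (a : ℝ) + 1 := min_le_left _ _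
      have h2 : (b : ℝ) ≤ max (a : ℝ) (b : ℝ) := le_max_right _ _
      linarith
    · have : (b : ℝ) + 1 ≤ (a : ℝ) := by exact_mod_cast Int.add_one_le_iff.2 h
      rw [ENNReal.ofReal_eq_zero.2]
      have h1 : min ((a : ℝ) + 1) ((b : ℝ) + 1) ≤ (b : ℝ) + 1 := min_le_right _ _
      have h2 : (a : ℝ) ≤ max (a : ℝ) (b : ℝ) := le_max_left _ _
      linarith
  rw [hcell, hcell, Set.prod_inter_prod, Measure.volume_eq_prod, Measure.prod_prod]
  have h : j.1 ≠ k.1 ∨ j.2 ≠ k.2 := by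
    by_contra hc; push_neg at hc; exact hjk (Prod.ext hc.1 hc.2)
  rcases h with h1 | h2
  · rw [key _ _ h1, zero_mul]
  · rw [key _ _ h2, mul_zero]

end Aux

theorem stmt17 (f : ℝ × ℝ → ℝ) (hf : ContDiff ℝ 2 f)
    (ε R : ℝ) (hε : 0 < ε) (hε1 : ε ≤ 1) (hR : 0 < R)
    (Q : Set (ℤ × ℤ)) (hQ : Q = {j : ℤ × ℤ | ε⁻¹ * R + 1 < (max |j.1| |j.2| : ℤ)})
    (x : ℤ × ℤ → ℝ × ℝ) (hx : ∀ j ∈ Q, x j ∈ cell j) :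
    ∑' j : Q, ENNReal.ofReal ((f (ε • x j)) ^ 2) ≤
      ENNReal.ofReal (4 * ε⁻¹ ^ 2) *
        ∫⁻ X in {X : ℝ × ℝ | R < eN X}, ENNReal.ofReal (H2integrand f X) := by
  have hεne : ε ≠ 0 := hε.ne'
  set g : ℝ × ℝ → ℝ := fun z => f (ε • z) with hg
  have hgC : ContDiff ℝ 2 g := hf.comp ((contDiff_const (c := ε)).smul contDiff_id)
  -- continuity of H2integrand f
  have hf2 : ContDiff ℝ ((1 : ℕ) + 1) f := by exact_mod_cast hf
  have hpd1 : ContDiff ℝ 1 (pd1 f) := by exact_mod_cast contDiff_pd1' (n := 1) f hf2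
  have hpd2 : ContDiff ℝ 1 (pd2 f) := by exact_mod_cast contDiff_pd2' (n := 1) f hf2
  have hc0 : Continuous f := hf.continuous
  have hc1 : Continuous (pd1 f) := hpd1.continuous
  have hc2 : Continuous (pd2 f) := hpd2.continuous
  have hc11 : Continuous (pd1 (pd1 f)) :=
    (contDiff_pd1' (n := 0) (pd1 f) (by exact_mod_cast hpd1)).continuous
  have hc12 : Continuous (pd1 (pd2 f)) :=
    (contDiff_pd1' (n := 0) (pd2 f) (by exact_mod_cast hpd2)).continuous
  have hc22 : Continuous (pd2 (pd2 f)) :=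
    (contDiff_pd2' (n := 0) (pd2 f) (by exact_mod_cast hpd2)).continuous
  have hH2cont : Continuous (H2integrand f) := by
    have : Continuous fun X => (f X) ^ 2 + (pd1 f X) ^ 2 + (pd2 f X) ^ 2 +
        (pd1 (pd1 f) X) ^ 2 + (pd1 (pd2 f) X) ^ 2 + (pd2 (pd2 f) X) ^ 2 := by fun_prop
    exact this
  have hmeas : Measurable fun X => ENNReal.ofReal (H2integrand f X) :=
    hH2cont.measurable.ennreal_ofReal
  set c : ℝ≥0∞ := ENNReal.ofReal (|(ε ^ 2)⁻¹|) with hc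
  -- key per-cell bound
  have key : ∀ j : ℤ × ℤ, j ∈ Q →
      ENNReal.ofReal ((f (ε • x j)) ^ 2) ≤
        4 * (c * ∫⁻ X in ε • cell j, ENNReal.ofReal (H2integrand f X)) := by
    intro j hj
    have step1 : ENNReal.ofReal ((g (x j)) ^ 2) ≤
        4 * ∫⁻ y in cell j, ENNReal.ofReal (H2integrand g y) :=
      twoD g hgC j (x j) (hx j hj)
    have step2 : (∫⁻ y in cell j, ENNReal.ofReal (H2integrand g y)) ≤
        ∫⁻ y in cell j, ENNReal.ofReal (H2integrand f (ε • y)) :=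
      lintegral_mono fun y => ENNReal.ofReal_le_ofReal (H2_scale f hf hε hε1 y)
    have step3 : (∫⁻ y in cell j, ENNReal.ofReal (H2integrand f (ε • y))) =
        c * ∫⁻ X in ε • cell j, ENNReal.ofReal (H2integrand f X) :=
      cov (fun X => ENNReal.ofReal (H2integrand f X)) (s := cell j) (show MeasurableSet (cell j) from measurableSet_Icc) hεne
    calc ENNReal.ofReal ((f (ε • x j)) ^ 2)
        = ENNReal.ofReal ((g (x j)) ^ 2) := rfl
      _ ≤ 4 * ∫⁻ y in cell j, ENNReal.ofReal (H2integrand g y) := step1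
      _ ≤ 4 * ∫⁻ y in cell j, ENNReal.ofReal (H2integrand f (ε • y)) := by gcongr
      _ = 4 * (c * ∫⁻ X in ε • cell j, ENNReal.ofReal (H2integrand f X)) := by rw [step3]
  -- disjointness and measurability of scaled cells
  have hnm : ∀ j : Q, NullMeasurableSet (ε • cell (j : ℤ × ℤ)) volume := fun j =>
    (measurableSet_Icc.const_smul_of_ne_zero hεne).nullMeasurableSet
  have hdisj : Pairwise (Function.onFun (AEDisjoint volume)
      fun j : Q => ε • cell (j : ℤ × ℤ)) := by
    intro i k hik
    have hne : (i : ℤ × ℤ) ≠ (k : ℤ × ℤ) := Subtype.coe_injective.ne hik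
    show volume (ε • cell (i : ℤ × ℤ) ∩ ε • cell (k : ℤ × ℤ)) = 0
    rw [← Set.smul_set_inter₀ hεne, Measure.addHaar_smul, cell_inter_null hne, mul_zero]
  have hsub : (⋃ j : Q, ε • cell (j : ℤ × ℤ)) ⊆ {X : ℝ × ℝ | R < eN X} := by
    apply Set.iUnion_subset
    rintro ⟨jv, hjv⟩ X hX
    obtain ⟨y, hy, rfl⟩ := hX
    rw [hQ] at hjv
    exact geom hε hjv hy
  -- put everything together
  have hconst : ENNReal.ofReal (4 * ε⁻¹ ^ 2) = 4 * c := by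
    rw [ENNReal.ofReal_mul (by norm_num)]
    congr 1
    · norm_num
    · rw [hc]
      congr 1
      rw [abs_of_pos (by positivity), inv_pow]
  calc ∑' j : Q, ENNReal.ofReal ((f (ε • x j)) ^ 2)
      ≤ ∑' j : Q, (4 * c) * ∫⁻ X in ε • cell (j : ℤ × ℤ),
          ENNReal.ofReal (H2integrand f X) := by
        apply ENNReal.tsum_le_tsum
        intro j
        rw [mul_assoc]
        exact key j j.2
    _ = (4 * c) * ∑' j : Q, ∫⁻ X in ε • cell (j : ℤ × ℤ),
          ENNReal.ofReal (H2integrand f X) := ENNReal.tsum_mul_left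
    _ = (4 * c) * ∫⁻ X in ⋃ j : Q, ε • cell (j : ℤ × ℤ),
          ENNReal.ofReal (H2integrand f X) := by
        rw [lintegral_iUnion₀ hnm hdisj]
    _ ≤ (4 * c) * ∫⁻ X in {X : ℝ × ℝ | R < eN X},
          ENNReal.ofReal (H2integrand f X) := by
        gcongr
    _ = ENNReal.ofReal (4 * ε⁻¹ ^ 2) * ∫⁻ X in {X : ℝ × ℝ | R < eN X},
          ENNReal.ofReal (H2integrand f X) := by rw [hconst]

end
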